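/- Let y₁ = y₂ = 1/2. Then for every t ∈ ℝ, 4·E(t) = 10t⁶ + 30t⁵ − 3t⁴ − 56t³ − 21t² + 12t + 1, and the polynomial 10t⁶ + 30t⁵ − 3t⁴ − 56t³ − 21t² + 12t + 1 has exactly six distinct real roots (equivalently, all six of its complex roots are real and simple). -/

import Mathlib

/-!
The sextic changes sign between consecutive points of `-3 < -2 < -1 < -1/2 < 0 < 1/2 < 3/2`,
so by the intermediate value theorem it has a real root in each of these six disjoint intervals.
A nonzero polynomial of degree at most six has at most six complex roots, so these six real
roots are all of them.
-/

/-- The polynomial `E(t)` as a real-valued function. -/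
def EFun (y₁ y₂ t : ℝ) : ℝ :=
  y₁^2 * (t^2 + 4*t + 1)^3 + y₂^2 * (t^2 - 2*t - 2)^3
    + 2*t^6 + 6*t^5 - 15*t^4 - 40*t^3 - 15*t^2 + 6*t + 2

open Polynomial

theorem exists_mem_Ioo_eq_zero_of_mul_neg {f : ℝ → ℝ} {a b : ℝ} (hab : a ≤ b)
    (hf : ContinuousOn f (Set.Icc a b)) (hsign : f a * f b < 0) :
    ∃ r ∈ Set.Ioo a b, f r = 0 := by
  rcases mul_neg_iff.mp hsign with ⟨ha, hb⟩ | ⟨ha, hb⟩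
  · exact intermediate_value_Ioo' hab hf ⟨hb, ha⟩
  · exact intermediate_value_Ioo hab hf ⟨ha, hb⟩

namespace Polynomial

theorem setOf_isRoot_eq_of_natDegree_le_card {R : Type*} [CommRing R] [IsDomain R]
    {p : R[X]} (hp : p ≠ 0) {s : Finset R} (hs : ∀ x ∈ s, p.IsRoot x)
    (hdeg : p.natDegree ≤ s.card) : {x | p.IsRoot x} = s := by
  classical
  have hsub : s ⊆ p.roots.toFinset := fun x hx ↦
    Multiset.mem_toFinset.mpr ((mem_roots hp).mpr (hs x hx))
  have hcard : p.roots.toFinset.card ≤ s.card :=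
    (Multiset.toFinset_card_le _).trans ((card_roots' p).trans hdeg)
  ext x
  rw [Finset.eq_of_subset_of_card_le hsub hcard]
  simp [mem_roots hp]

theorem exists_strictMono_isRoot_of_sign_changes (p : ℝ[X]) {n : ℕ} {a : Fin (n + 1) → ℝ}
    (ha : Monotone a) (hsign : ∀ i : Fin n, p.eval (a i.castSucc) * p.eval (a i.succ) < 0) :
    ∃ r : Fin n → ℝ, StrictMono r ∧ ∀ i, p.IsRoot (r i) := by
  choose r hr hroot using fun i : Fin n ↦
    exists_mem_Ioo_eq_zero_of_mul_neg (ha (Fin.castSucc_le_succ i)) p.continuousOn (hsign i)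
  refine ⟨r, fun i j hij ↦ ?_, hroot⟩
  calc r i < a i.succ := (hr i).2
    _ ≤ a j.castSucc := ha (Fin.succ_le_castSucc_iff.mpr hij)
    _ < r j := (hr j).1

theorem setOf_isRoot_map_complex_eq_range_of_sign_changes {p : ℝ[X]} (hp : p ≠ 0) {n : ℕ}
    (hdeg : p.natDegree ≤ n) {a : Fin (n + 1) → ℝ} (ha : Monotone a)
    (hsign : ∀ i : Fin n, p.eval (a i.castSucc) * p.eval (a i.succ) < 0) :
    ∃ r : Fin n → ℝ, StrictMono r ∧
      {z : ℂ | (p.map (algebraMap ℝ ℂ)).IsRoot z} = Set.range (fun i ↦ (r i : ℂ)) := by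
  classical
  obtain ⟨r, hr, hroot⟩ := exists_strictMono_isRoot_of_sign_changes p ha hsign
  have hinj : Function.Injective (fun i ↦ (r i : ℂ)) :=
    Complex.ofReal_injective.comp hr.injective
  refine ⟨r, hr, ?_⟩
  have key := setOf_isRoot_eq_of_natDegree_le_card (s := Finset.univ.image fun i ↦ (r i : ℂ))
    ((Polynomial.map_ne_zero_iff (algebraMap ℝ ℂ).injective).mpr hp)
    (by simpa using fun i ↦ (hroot i).map (f := algebraMap ℝ ℂ))
    (by rw [natDegree_map, Finset.card_image_of_injective _ hinj]; simpa using hdeg)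
  simpa using key

end Polynomial

noncomputable def sextic : ℝ[X] :=
  10 * X ^ 6 + 30 * X ^ 5 - 3 * X ^ 4 - 56 * X ^ 3 - 21 * X ^ 2 + 12 * X + 1

theorem sextic_map_eval (z : ℂ) : (sextic.map (algebraMap ℝ ℂ)).eval z
    = 10*z^6 + 30*z^5 - 3*z^4 - 56*z^3 - 21*z^2 + 12*z + 1 := by
  simp [sextic]

theorem sextic_ne_zero : sextic ≠ 0 := fun h ↦ by
  simpa [sextic] using congrArg (eval 0) h

theorem sextic_natDegree_le : sextic.natDegree ≤ 6 := by
  unfold sextic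
  compute_degree

noncomputable def sexticSignPoints : Fin 7 → ℝ := ![-3, -2, -1, -1/2, 0, 1/2, 3/2]

theorem sexticSignPoints_monotone : Monotone sexticSignPoints :=
  Fin.monotone_iff_le_succ.mpr fun i ↦ by fin_cases i <;> simp [sexticSignPoints] <;> norm_num

theorem sextic_sign_changes (i : Fin 6) :
    sextic.eval (sexticSignPoints i.castSucc) * sextic.eval (sexticSignPoints i.succ) < 0 := by
  fin_cases i <;> simp [sexticSignPoints, sextic] <;> norm_num

theorem stmt_8 (y₁ y₂ : ℝ) (h1 : y₁ = 1/2) (h2 : y₂ = 1/2) :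
    (∀ t : ℝ, 4 * EFun y₁ y₂ t
      = 10*t^6 + 30*t^5 - 3*t^4 - 56*t^3 - 21*t^2 + 12*t + 1) ∧
    ({z : ℂ | 10*z^6 + 30*z^5 - 3*z^4 - 56*z^3 - 21*z^2 + 12*z + 1 = 0}).ncard = 6 ∧
    (∀ z : ℂ, 10*z^6 + 30*z^5 - 3*z^4 - 56*z^3 - 21*z^2 + 12*z + 1 = 0 →
      ∃ r : ℝ, z = (r : ℂ)) := by
  obtain ⟨r, hr, hroots⟩ := setOf_isRoot_map_complex_eq_range_of_sign_changes sextic_ne_zero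
    sextic_natDegree_le sexticSignPoints_monotone sextic_sign_changes
  simp only [IsRoot.def, sextic_map_eval] at hroots
  refine ⟨fun t ↦ by simp only [EFun, h1, h2]; ring, ?_, fun z hz ↦ ?_⟩
  · have hinj : Function.Injective (fun i ↦ (r i : ℂ)) :=
      Complex.ofReal_injective.comp hr.injective
    rw [hroots, Set.ncard_range_of_injective hinj, Nat.card_fin]
  · obtain ⟨i, rfl⟩ : z ∈ Set.range (fun i ↦ (r i : ℂ)) := hroots ▸ hz
    exact ⟨r i, rfl⟩
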